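/- arXiv:2502.07593 — 2 statements merged into one kernel-verified Lean document; each statement's English description precedes it below -/
import Mathlib

section
/- No strategy in the two-product, two-rating, one-observation game has worst-case expected regret (over all column-stochastic states) strictly less than 1/8. -/
/-!
Le Cam's two-point method. In the states `mirrorState (1/4)` and `mirrorState (3/4)`, which are
exchanged by swapping the two products, the better product beats the other by `1/2`. Hence the
regret is `1/2 · ∑ p ω (1 - σ ω)` in the first state and `1/2 · ∑ q ω σ ω` in the second, where
`p`, `q` are the two observation laws, and the sum of the two is at least `1/2 · ∑ min (p ω) (q ω)`.
This overlap of the two laws is `1/2`, so one of the regrets is at least `1/8`.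
-/

open Finset

/-- A state of Nature: a column-stochastic `2 × 2` matrix, `S r d` being the probability that
product `d` receives rating `r + 1` (ratings are `1` and `2`). -/
def IsState (S : Fin 2 → Fin 2 → ℝ) : Prop :=
  (∀ r d, 0 ≤ S r d) ∧ (∀ d, S 0 d + S 1 d = 1)

/-- The value of product `d` in state `S`: the expected rating `∑_r (r+1) · S r d`. -/
def value (S : Fin 2 → Fin 2 → ℝ) (d : Fin 2) : ℝ :=
  ∑ r : Fin 2, ((r : ℕ) + 1 : ℝ) * S r d

/-- Expected regret of a (randomized) strategy `σ` against state `S`.  An observation is a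
function `ω : Fin 2 → Fin 2` giving the observed rating of each product; it occurs with
probability `S (ω 0) 0 * S (ω 1) 1`, and `σ ω` is the probability of selecting product `0`. -/
def regret (σ : (Fin 2 → Fin 2) → ℝ) (S : Fin 2 → Fin 2 → ℝ) : ℝ :=
  max (value S 0) (value S 1) -
    ∑ ω : Fin 2 → Fin 2,
      S (ω 0) 0 * S (ω 1) 1 * (σ ω * value S 0 + (1 - σ ω) * value S 1)

def obsProb (S : Fin 2 → Fin 2 → ℝ) (ω : Fin 2 → Fin 2) : ℝ :=
  S (ω 0) 0 * S (ω 1) 1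

lemma sum_obsProb {S : Fin 2 → Fin 2 → ℝ} (hS : IsState S) : ∑ ω, obsProb S ω = 1 := by
  have h := Fintype.prod_sum fun d r => S r d
  simp only [Fin.prod_univ_two, Fin.sum_univ_two, hS.2, mul_one] at h
  exact h.symm

lemma regret_eq_of_value_one_le (σ : (Fin 2 → Fin 2) → ℝ) {S : Fin 2 → Fin 2 → ℝ}
    (hS : IsState S) (h : value S 1 ≤ value S 0) :
    regret σ S = (value S 0 - value S 1) * ∑ ω, obsProb S ω * (1 - σ ω) := by
  have hterm : ∀ ω, obsProb S ω * (σ ω * value S 0 + (1 - σ ω) * value S 1) =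
      value S 0 * obsProb S ω - (value S 0 - value S 1) * (obsProb S ω * (1 - σ ω)) :=
    fun ω => by ring
  rw [regret, max_eq_left h]
  change _ - ∑ ω, obsProb S ω * _ = _
  simp only [hterm, sum_sub_distrib, ← mul_sum, sum_obsProb hS]
  ring

lemma regret_eq_of_value_zero_le (σ : (Fin 2 → Fin 2) → ℝ) {S : Fin 2 → Fin 2 → ℝ}
    (hS : IsState S) (h : value S 0 ≤ value S 1) :
    regret σ S = (value S 1 - value S 0) * ∑ ω, obsProb S ω * σ ω := by
  have hterm : ∀ ω, obsProb S ω * (σ ω * value S 0 + (1 - σ ω) * value S 1) =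
      value S 1 * obsProb S ω - (value S 1 - value S 0) * (obsProb S ω * σ ω) :=
    fun ω => by ring
  rw [regret, max_eq_right h]
  change _ - ∑ ω, obsProb S ω * _ = _
  simp only [hterm, sum_sub_distrib, ← mul_sum, sum_obsProb hS]
  ring

lemma sum_min_le_sum_mul_add_sum_mul {ι : Type*} [Fintype ι] (p q σ : ι → ℝ)
    (hσ : ∀ i, σ i ∈ Set.Icc (0 : ℝ) 1) :
    ∑ i, min (p i) (q i) ≤ ∑ i, p i * (1 - σ i) + ∑ i, q i * σ i := by
  rw [← sum_add_distrib]
  refine sum_le_sum fun i _ => ?_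
  obtain ⟨h0, h1⟩ := hσ i
  calc min (p i) (q i) = min (p i) (q i) * (1 - σ i) + min (p i) (q i) * σ i := by ring
    _ ≤ p i * (1 - σ i) + q i * σ i := by
      have h1' : 0 ≤ 1 - σ i := by linarith
      gcongr
      · exact min_le_left _ _
      · exact min_le_right _ _

def mirrorState (a : ℝ) : Fin 2 → Fin 2 → ℝ :=
  fun r d => if r = d then a else 1 - a

lemma isState_mirrorState {a : ℝ} (h0 : 0 ≤ a) (h1 : a ≤ 1) : IsState (mirrorState a) := by
  refine ⟨fun r d => ?_, fun d => ?_⟩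
  · unfold mirrorState; split_ifs <;> linarith
  · fin_cases d <;> simp [mirrorState]

lemma value_mirrorState_zero (a : ℝ) : value (mirrorState a) 0 = 2 - a := by
  simp [value, mirrorState]; ring

lemma value_mirrorState_one (a : ℝ) : value (mirrorState a) 1 = 1 + a := by
  simp [value, mirrorState]; ring

lemma regret_mirrorState_of_le_half (σ : (Fin 2 → Fin 2) → ℝ) {a : ℝ} (h0 : 0 ≤ a)
    (h : a ≤ 1 / 2) :
    regret σ (mirrorState a) = (1 - 2 * a) * ∑ ω, obsProb (mirrorState a) ω * (1 - σ ω) := by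
  have hle : value (mirrorState a) 1 ≤ value (mirrorState a) 0 := by
    rw [value_mirrorState_zero, value_mirrorState_one]; linarith
  rw [regret_eq_of_value_one_le σ (isState_mirrorState h0 (by linarith)) hle,
    value_mirrorState_zero, value_mirrorState_one]
  ring

lemma regret_mirrorState_of_half_le (σ : (Fin 2 → Fin 2) → ℝ) {a : ℝ} (h : 1 / 2 ≤ a)
    (h1 : a ≤ 1) :
    regret σ (mirrorState a) = (2 * a - 1) * ∑ ω, obsProb (mirrorState a) ω * σ ω := by
  have hle : value (mirrorState a) 0 ≤ value (mirrorState a) 1 := by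
    rw [value_mirrorState_zero, value_mirrorState_one]; linarith
  rw [regret_eq_of_value_zero_le σ (isState_mirrorState (by linarith) h1) hle,
    value_mirrorState_zero, value_mirrorState_one]
  ring

lemma sum_min_obsProb_mirrorState :
    ∑ ω, min (obsProb (mirrorState (1 / 4)) ω) (obsProb (mirrorState (3 / 4)) ω) = 1 / 2 := by
  rw [← (finTwoArrowEquiv (Fin 2)).symm.sum_comp, Fintype.sum_prod_type]
  simp [Fin.sum_univ_two, finTwoArrowEquiv, obsProb, mirrorState]
  norm_num

/-- No strategy in the two-product, two-rating, one-observation game has worst-case expected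
regret strictly below `1/8`: for every strategy there is a state with regret at least `1/8`. -/
theorem no_strategy_beats_one_eighth
    (σ : (Fin 2 → Fin 2) → ℝ) (hσ : ∀ ω, σ ω ∈ Set.Icc (0:ℝ) 1) :
    ∃ S : Fin 2 → Fin 2 → ℝ, IsState S ∧ 1 / 8 ≤ regret σ S := by
  have hregA := regret_mirrorState_of_le_half σ (a := 1 / 4) (by norm_num) (by norm_num)
  have hregB := regret_mirrorState_of_half_le σ (a := 3 / 4) (by norm_num) (by norm_num)
  have hoverlap := sum_min_le_sum_mul_add_sum_mul
    (obsProb (mirrorState (1 / 4))) (obsProb (mirrorState (3 / 4))) σ hσ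
  rw [sum_min_obsProb_mirrorState] at hoverlap
  by_contra! hsmall
  linarith [hsmall _ (isState_mirrorState (a := 1 / 4) (by norm_num) (by norm_num)),
    hsmall _ (isState_mirrorState (a := 3 / 4) (by norm_num) (by norm_num))]
end

section
/- In the two-product, two-rating model with p1 < p2 (so product 1 is strictly better), for any fixed observation counts a,b,c,d > 0 with a+b = c+d = m and b > d, the greedy strategy incurs zero regret on this observation matrix (it selects product 1 with probability 1), while the Thompson Sampling strategy, which selects product 2 exactly when an independent Beta(b,a) sample is less than an independent Beta(d,c) sample, incurs strictly positive expected regret P(X<Y)·(p2-p1) > 0. -/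
open intervalIntegral Set

lemma beta_kernel_cont (i j : ℕ) : Continuous (fun x : ℝ => x ^ i * (1 - x) ^ j) := by
  continuity

lemma beta_int_pos (i j : ℕ) : 0 < ∫ t in (0:ℝ)..1, t ^ i * (1 - t) ^ j := by
  apply intervalIntegral.intervalIntegral_pos_of_pos_on
    ((beta_kernel_cont i j).intervalIntegrable 0 1)
  · intro x hx
    exact mul_pos (pow_pos hx.1 i) (pow_pos (by linarith [hx.2]) j)
  · norm_num

lemma beta_partial_pos (i j : ℕ) {y : ℝ} (hy0 : 0 < y) (hy1 : y < 1) :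
    0 < ∫ t in (0:ℝ)..y, t ^ i * (1 - t) ^ j := by
  apply intervalIntegral.intervalIntegral_pos_of_pos_on
    ((beta_kernel_cont i j).intervalIntegrable 0 y)
  · intro x hx
    exact mul_pos (pow_pos hx.1 i) (pow_pos (by nlinarith [hx.2]) j)
  · exact hy0

/-- Two products with rating-1 probabilities `p1 < p2` (values `2 - p1 > 2 - p2`).  On an
observation matrix with `a` rating-1 and `b` rating-2 observations for product 1, and `c`
rating-1 and `d` rating-2 observations for product 2, where `a+b = c+d = m` and `b > d`:
the greedy strategy (which compares observed average ratings, ties broken uniformly)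
selects product 1 with probability 1 and incurs zero regret, whereas Thompson Sampling,
which selects product 2 exactly when an independent `Beta(b,a)` sample `X` is below an
independent `Beta(d,c)` sample `Y`, incurs expected regret `P(X<Y)·(p2-p1) > 0`. -/
theorem greedy_beats_thompson (a b c d m : ℕ)
    (ha : 0 < a) (hb : 0 < b) (hc : 0 < c) (hd : 0 < d)
    (hab : a + b = m) (hcd : c + d = m) (hbd : d < b)
    (p1 p2 : ℝ) (h0 : 0 ≤ p1) (h12 : p1 < p2) (h1 : p2 ≤ 1) :
    ((p2 - p1) *
        (if ((c : ℝ) + 2 * d) / m < ((a : ℝ) + 2 * b) / m then 0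
         else if ((a : ℝ) + 2 * b) / m = ((c : ℝ) + 2 * d) / m then 1 / 2
         else 1) = 0) ∧
    0 < (∫ y in (0:ℝ)..1, ∫ x in (0:ℝ)..y,
          (x ^ (b - 1) * (1 - x) ^ (a - 1) /
              ∫ t in (0:ℝ)..1, t ^ (b - 1) * (1 - t) ^ (a - 1)) *
          (y ^ (d - 1) * (1 - y) ^ (c - 1) /
              ∫ t in (0:ℝ)..1, t ^ (d - 1) * (1 - t) ^ (c - 1))) * (p2 - p1) := by
  have hmN : 0 < m := by omega
  have hm : (0:ℝ) < m := by exact_mod_cast hmN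
  set B1 : ℝ := ∫ t in (0:ℝ)..1, t ^ (b - 1) * (1 - t) ^ (a - 1) with hB1
  set B2 : ℝ := ∫ t in (0:ℝ)..1, t ^ (d - 1) * (1 - t) ^ (c - 1) with hB2
  have hB1p : 0 < B1 := beta_int_pos _ _
  have hB2p : 0 < B2 := beta_int_pos _ _
  constructor
  · have hnum : (c : ℝ) + 2 * d < (a : ℝ) + 2 * b := by
      have : c + 2 * d < a + 2 * b := by omega
      exact_mod_cast this
    rw [if_pos (by gcongr), mul_zero]
  · have inner_eq : ∀ y : ℝ,
        (∫ x in (0:ℝ)..y,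
          (x ^ (b - 1) * (1 - x) ^ (a - 1) / B1) *
          (y ^ (d - 1) * (1 - y) ^ (c - 1) / B2))
        = (∫ x in (0:ℝ)..y, x ^ (b - 1) * (1 - x) ^ (a - 1)) *
            (y ^ (d - 1) * (1 - y) ^ (c - 1) / (B1 * B2)) := by
      intro y
      rw [show (fun x : ℝ => (x ^ (b - 1) * (1 - x) ^ (a - 1) / B1) *
            (y ^ (d - 1) * (1 - y) ^ (c - 1) / B2))
          = fun x : ℝ => (x ^ (b - 1) * (1 - x) ^ (a - 1)) *
            (y ^ (d - 1) * (1 - y) ^ (c - 1) / (B1 * B2)) from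
          funext fun x => by rw [div_mul_div_comm, mul_div_assoc]]
      exact intervalIntegral.integral_mul_const _ _
    simp only [inner_eq]
    apply mul_pos ?_ (by linarith)
    have hF : Continuous (fun y : ℝ => ∫ x in (0:ℝ)..y, x ^ (b - 1) * (1 - x) ^ (a - 1)) :=
      intervalIntegral.continuous_primitive
        (fun u v => (beta_kernel_cont _ _).intervalIntegrable u v) 0
    have hG : Continuous (fun y : ℝ =>
        (∫ x in (0:ℝ)..y, x ^ (b - 1) * (1 - x) ^ (a - 1)) *
          (y ^ (d - 1) * (1 - y) ^ (c - 1) / (B1 * B2))) :=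
      hF.mul ((beta_kernel_cont _ _).div_const _)
    apply intervalIntegral.intervalIntegral_pos_of_pos_on (hG.intervalIntegrable 0 1)
    · intro y hy
      apply mul_pos (beta_partial_pos _ _ hy.1 hy.2)
      apply div_pos (mul_pos (pow_pos hy.1 _) (pow_pos (by linarith [hy.2]) _))
        (mul_pos hB1p hB2p)
    · norm_num
end
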